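/- For any k ≥ 0 and any t ∈ ℝ with each starting value κ₀ ∈ {−k/(k+1), −k/(k−1)} (interpreting the second only when k ≠ 1), if t > log(√(1+2k)) then (κ₀ cosh t + sinh t)/(κ₀ sinh t + cosh t) > 0. -/
import Mathlib


/-- For `k ≥ 0` and `κ₀ = -k/(k+1)` or (when `k ≠ 1`) `κ₀ = -k/(k-1)`,
if `t > log √(1+2k)` then `(κ₀ cosh t + sinh t)/(κ₀ sinh t + cosh t) > 0`. -/
theorem stmt_2 (k t κ₀ : ℝ) (hk : 0 ≤ k)
    (hκ : κ₀ = -k / (k + 1) ∨ (k ≠ 1 ∧ κ₀ = -k / (k - 1)))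
    (ht : t > Real.log (Real.sqrt (1 + 2 * k))) :
    0 < (κ₀ * Real.cosh t + Real.sinh t) / (κ₀ * Real.sinh t + Real.cosh t) := by
  have h1 : (0:ℝ) < 1 + 2*k := by linarith
  have he : Real.sqrt (1 + 2*k) < Real.exp t := by
    have := Real.exp_lt_exp.2 ht
    rwa [Real.exp_log (Real.sqrt_pos.2 h1)] at this
  have he2 : 1 + 2*k < Real.exp t * Real.exp t := by
    nlinarith [Real.sq_sqrt h1.le, Real.sqrt_nonneg (1 + 2*k)]
  have hu : 0 < Real.exp t := Real.exp_pos t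
  have hv : 0 < Real.exp (-t) := Real.exp_pos _
  have huv : Real.exp t * Real.exp (-t) = 1 := by
    rw [← Real.exp_add]; simp
  rw [Real.cosh_eq, Real.sinh_eq]
  set u := Real.exp t
  set v := Real.exp (-t)
  rcases hκ with h | ⟨hk1, h⟩
  · subst h
    have hk1 : (0:ℝ) < k + 1 := by linarith
    have hN : 0 < u - (2*k+1)*v := by nlinarith
    have hD : 0 < u + (2*k+1)*v := by nlinarith
    have e1 : -k/(k+1) * ((u+v)/2) + (u-v)/2 = (u - (2*k+1)*v)/(2*(k+1)) := by
      field_simp; ring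
    have e2 : -k/(k+1) * ((u-v)/2) + (u+v)/2 = (u + (2*k+1)*v)/(2*(k+1)) := by
      field_simp; ring
    rw [e1, e2]
    exact div_pos (div_pos hN (by linarith)) (div_pos hD (by linarith))
  · subst h
    have hne : k - 1 ≠ 0 := sub_ne_zero.2 hk1
    have e1 : -k/(k-1) * ((u+v)/2) + (u-v)/2 = (-u + (1-2*k)*v)/(2*(k-1)) := by
      field_simp; ring
    have e2 : -k/(k-1) * ((u-v)/2) + (u+v)/2 = (-u + (2*k-1)*v)/(2*(k-1)) := by
      field_simp; ring
    rw [e1, e2]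
    rcases lt_or_gt_of_ne hk1 with hlt | hgt
    · have hN : 0 < -(-u + (1-2*k)*v) := by nlinarith
      have hD : 0 < -(-u + (2*k-1)*v) := by nlinarith
      have hc : 2*(k-1) < 0 := by linarith
      exact div_pos (div_pos_of_neg_of_neg (by linarith) hc)
        (div_pos_of_neg_of_neg (by linarith) hc)
    · have hN : -u + (1-2*k)*v < 0 := by nlinarith
      have hD : -u + (2*k-1)*v < 0 := by nlinarith
      have hc : 0 < 2*(k-1) := by linarith
      exact div_pos_of_neg_of_neg (div_neg_of_neg_of_pos hN hc)
        (div_neg_of_neg_of_pos hD hc)
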